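/- arXiv:1811.05846 — 2 statements merged into one kernel-verified Lean document; each statement's English description precedes it below -/
import Mathlib

section
/- The conditions c_i < c_{i+1}+1 = c_i + c_{i+c_i} and d_i + 2 = d_{i+1} + 1 = d_i + d_{i+c_i} on a Kupisch series [c_0,...,c_{n-1}] with associated coKupisch series [d_0,...,d_{n-1}] hold at index i if and only if c_i = 2, d_{i+2} = 2, c_{i+1} - c_{i+2} = 1 and d_{i+1} - d_i = 1. -/
namespace Nak

/-- Condition for `c` to be the Kupisch series of a (connected) `n`-Nakayama algebra:
entries are positive, satisfy `c i ≤ c (i+1) + 1` cyclically, and at most one vertex is a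
sink (i.e. at most one `c i = 1`; if one exists the algebra is an LNakayama algebra,
otherwise a CNakayama algebra). -/
def IsKupisch {n : ℕ} (c : ZMod n → ℕ) : Prop :=
  (∀ i, 1 ≤ c i) ∧ (∀ i, c i ≤ c (i + 1) + 1) ∧ (∀ i j, c i = 1 → c j = 1 → i = j)

/-- Condition for `c` to be the Kupisch series of an `(n+1)`-LNakayama algebra
(linear quiver with sink at vertex `n`). -/
def IsLKupisch (n : ℕ) (c : ZMod (n + 1) → ℕ) : Prop :=
  (∀ i, 1 ≤ c i) ∧ (∀ i, c i ≤ c (i + 1) + 1) ∧ c (n : ZMod (n + 1)) = 1 ∧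
    ∀ i, i ≠ (n : ZMod (n + 1)) → 2 ≤ c i

/-- The coKupisch series determined by the Kupisch series `c`:
`d i = min {k | k ≥ c (i - k)}`, the dimension of the indecomposable injective at vertex `i`. -/
noncomputable def coK {n : ℕ} (c : ZMod n → ℕ) (i : ZMod n) : ℕ :=
  sInf {k : ℕ | 1 ≤ k ∧ c (i - (k : ZMod n)) ≤ k}

/-- `PdIs c i k m` : for the Nakayama algebra with Kupisch series `c`, the indecomposable
uniserial module with top at vertex `i` and dimension `k` (with `1 ≤ k ≤ c i`) has
projective dimension `m`.  It is projective iff `k = c i`, and otherwise its first syzygy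
is the uniserial module with top `i + k` and dimension `c i - k`.  In particular
`PdIs c i 1 m` states that the simple module `S i` has projective dimension `m`. -/
inductive PdIs {n : ℕ} (c : ZMod n → ℕ) : ZMod n → ℕ → ℕ → Prop
  | proj (i : ZMod n) (k : ℕ) (h : k = c i) : PdIs c i k 0
  | step (i : ZMod n) (k m : ℕ) (h : k < c i)
      (h' : PdIs c (i + (k : ZMod n)) (c i - k) m) : PdIs c i k (m + 1)

/-- `CoSyz c s k l s' k'` : the `l`-th cosyzygy (in a minimal injective coresolution) of
the indecomposable uniserial module with socle at vertex `s` and dimension `k` is the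
uniserial module with socle `s'` and dimension `k'`.  The module is injective iff
`k = coK c s`, and otherwise its first cosyzygy has socle `s - k` and dimension
`coK c s - k`. -/
inductive CoSyz {n : ℕ} (c : ZMod n → ℕ) : ZMod n → ℕ → ℕ → ZMod n → ℕ → Prop
  | zero (s : ZMod n) (k : ℕ) : CoSyz c s k 0 s k
  | step (s : ZMod n) (k l : ℕ) (s' : ZMod n) (k' : ℕ)
      (h : CoSyz c s k l s' k') (h' : k' < coK c s') :
      CoSyz c s k (l + 1) (s' - (k' : ZMod n)) (coK c s' - k')

/-- The dimension of `Ext^l(S i, A)`: for a minimal injective coresolution of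
`A = ⊕_r e_r A`, this is the number of indecomposable projectives `e_r A` (which have
socle at vertex `r + c r - 1` and dimension `c r`) whose `l`-th cosyzygy has socle `S i`. -/
noncomputable def extDim {n : ℕ} (c : ZMod n → ℕ) (i : ZMod n) (l : ℕ) : ℕ :=
  Nat.card {r : ZMod n // ∃ m, CoSyz c (r + (c r : ZMod n) - 1) (c r) l i m}

/-- The simple module `S i` is `k`-regular: it has projective dimension `k`,
`Ext^j(S i, A) = 0` for `j < k`, and `dim Ext^k(S i, A) = 1`. -/
def IsRegular {n : ℕ} (c : ZMod n → ℕ) (k : ℕ) (i : ZMod n) : Prop :=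
  PdIs c i 1 k ∧ (∀ j < k, extDim c i j = 0) ∧ extDim c i k = 1

lemma coK_set_nonempty {n : ℕ} (hn : 0 < n) (c : ZMod n → ℕ) (i : ZMod n) :
    {k : ℕ | 1 ≤ k ∧ c (i - (k : ZMod n)) ≤ k}.Nonempty := by
  haveI : NeZero n := ⟨hn.ne'⟩
  exact ⟨Finset.univ.sup c + 1, Nat.le_add_left 1 _,
    le_trans (Finset.le_sup (Finset.mem_univ _)) (Nat.le_succ _)⟩

lemma coK_spec {n : ℕ} (hn : 0 < n) (c : ZMod n → ℕ) (i : ZMod n) :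
    1 ≤ coK c i ∧ c (i - (coK c i : ZMod n)) ≤ coK c i :=
  Nat.sInf_mem (coK_set_nonempty hn c i)

lemma kupisch_chain {n : ℕ} (c : ZMod n → ℕ) (hc : IsKupisch c) :
    ∀ (t : ℕ) (j : ZMod n), c j ≤ c (j + (t : ZMod n)) + t := by
  intro t
  induction t with
  | zero => intro j; simp
  | succ t ih =>
    intro j
    have key : j + 1 + (t : ZMod n) = j + ((t + 1 : ℕ) : ZMod n) := by push_cast; ring
    calc c j ≤ c (j + 1) + 1 := hc.2.1 j
      _ ≤ (c (j + 1 + (t : ZMod n)) + t) + 1 := Nat.add_le_add_right (ih (j + 1)) 1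
      _ = c (j + ((t + 1 : ℕ) : ZMod n)) + (t + 1) := by rw [key]; ring

/-- Purely combinatorial reduction: for a Kupisch series `c` with
coKupisch series `d = coK c`, the conditions
`c i < c (i+1) + 1 = c i + c (i + c i)` and `d i + 2 = d (i+1) + 1 = d i + d (i + c i)`
hold at `i` iff `c i = 2`, `d (i+2) = 2`, `c (i+1) - c (i+2) = 1` and `d (i+1) - d i = 1`. -/
theorem two_regular_conditions_iff {n : ℕ} (hn : 0 < n) (c : ZMod n → ℕ)
    (hc : IsKupisch c) (i : ZMod n) :
    (c i < c (i + 1) + 1 ∧ c (i + 1) + 1 = c i + c (i + (c i : ZMod n)) ∧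
        coK c i + 2 = coK c (i + 1) + 1 ∧
        coK c (i + 1) + 1 = coK c i + coK c (i + (c i : ZMod n))) ↔
      (c i = 2 ∧ coK c (i + 2) = 2 ∧ (c (i + 1) : ℤ) - c (i + 2) = 1 ∧
        (coK c (i + 1) : ℤ) - coK c i = 1) := by
  obtain ⟨hpos, hstep, huniq⟩ := hc
  constructor
  · rintro ⟨h1, h2, h3, h4⟩
    have hd1 : coK c (i + 1) = coK c i + 1 := by omega
    have hd2 : coK c (i + (c i : ZMod n)) = 2 := by omega
    have hci : c i = 2 := by
      rcases Nat.lt_or_ge (c i) 2 with h | h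
      · -- c i = 1 : impossible
        exfalso
        have h1' : c i = 1 := le_antisymm (by omega) (hpos i)
        have key : i + ((c i : ℕ) : ZMod n) = i + 1 := by rw [h1']; simp
        rw [key] at hd2
        have hdi : coK c i = 1 := by omega
        have hmem := coK_spec hn c i
        rw [hdi] at hmem
        have hc1 : c (i - ((1 : ℕ) : ZMod n)) = 1 :=
          le_antisymm hmem.2 (hpos _)
        have := huniq _ _ hc1 h1'
        simp only [Nat.cast_one] at this
        have hii : i + 1 = i := by
          have := congrArg (· + 1) this
          simp at this
          rw [this, add_zero]
        rw [hii] at hd1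
        omega
      · rcases Nat.lt_or_ge (c i) 3 with h' | h'
        · omega
        · exfalso
          obtain ⟨t, ht⟩ : ∃ t, c i = t + 3 := ⟨c i - 3, by omega⟩
          have hab : c i ≤ c (i + 1) := by omega
          have hchain := kupisch_chain c ⟨hpos, hstep, huniq⟩ t (i + 1)
          have hmem := coK_spec hn c (i + ((c i : ℕ) : ZMod n))
          rw [hd2] at hmem
          have key : i + ((c i : ℕ) : ZMod n) - ((2 : ℕ) : ZMod n)
              = i + 1 + (t : ZMod n) := by
            rw [ht]; push_cast; ring
          rw [key] at hmem
          omega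
    have hcast : ((c i : ℕ) : ZMod n) = 2 := by rw [hci]; norm_num
    rw [hcast] at h2 hd2
    exact ⟨hci, hd2, by omega, by omega⟩
  · rintro ⟨hci, hd2, hc12, hd01⟩
    have hcast : ((c i : ℕ) : ZMod n) = 2 := by rw [hci]; norm_num
    rw [hcast]
    have h12 : c (i + 1) = c (i + 2) + 1 := by omega
    have hd : coK c (i + 1) = coK c i + 1 := by omega
    have hpos2 := hpos (i + 2)
    exact ⟨by omega, by omega, by omega, by omega⟩

end Nak
end

section
/- The number of subsets of {1,2,...,n-1} containing no two consecutive integers equals the Fibonacci number F(n+1), where F(1)=F(2)=1 and F(n+2)=F(n)+F(n+1). Consequently, the number of (n+1)-LNakayama algebras of global dimension at most 2 satisfying the restricted Gorenstein condition equals F(n+1). -/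
namespace Nak

/-- The Kupisch series of the opposite algebra: the reverse of the coKupisch series. -/
noncomputable def copOf (n : ℕ) (c : ZMod (n + 1) → ℕ) : ZMod (n + 1) → ℕ :=
  fun i => coK c ((n : ZMod (n + 1)) - i)

/-- The `(n+1)`-LNakayama algebra with Kupisch series `c` has global dimension at most
`2` and satisfies the restricted Gorenstein condition: either all simples are projective
(global dimension `0`), or the global dimension is `m ∈ {1, 2}` and every simple right
module (over `c`) and every simple left module (i.e. right module over the opposite
algebra, whose Kupisch series is `copOf n c`) of projective dimension `m` is `m`-regular. -/
noncomputable def ResGorLE2 (n : ℕ) (c : ZMod (n + 1) → ℕ) : Prop :=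
  (∀ i, c i = 1) ∨
    ((∀ i, c i = 1 ∨ PdIs c i 1 1) ∧ (∃ i, PdIs c i 1 1) ∧
      (∀ i, PdIs c i 1 1 → IsRegular c 1 i) ∧
      (∀ i, PdIs (copOf n c) i 1 1 → IsRegular (copOf n c) 1 i)) ∨
    ((∀ i, c i = 1 ∨ PdIs c i 1 1 ∨ PdIs c i 1 2) ∧ (∃ i, PdIs c i 1 2) ∧
      (∀ i, PdIs c i 1 2 → IsRegular c 2 i) ∧
      (∀ i, PdIs (copOf n c) i 1 2 → IsRegular (copOf n c) 2 i))

/-! ### Part 1: counting subsets without two consecutive elements -/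

lemma finite_noconsec (m : ℕ) (Q : Finset ℕ → Prop) :
    Finite {s : Finset ℕ // s ⊆ Finset.Icc 1 m ∧ Q s} := by
  apply Finite.of_injective
    (β := ↥((Finset.Icc 1 m).powerset))
    (fun x : {s : Finset ℕ // s ⊆ Finset.Icc 1 m ∧ Q s} =>
      (⟨x.1, Finset.mem_powerset.2 x.2.1⟩ : ↥((Finset.Icc 1 m).powerset)))
  intro a b h
  exact Subtype.ext (Subtype.mk_eq_mk.mp h)

lemma card_filter_eq (m : ℕ) :
    Nat.card {s : Finset ℕ // s ⊆ Finset.Icc 1 m ∧ ∀ x ∈ s, x + 1 ∉ s}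
      = ((Finset.Icc 1 m).powerset.filter fun s => ∀ x ∈ s, x + 1 ∉ s).card := by
  rw [← Nat.card_eq_finsetCard]
  refine Nat.card_congr (Equiv.subtypeEquivRight ?_)
  intro s
  simp [Finset.mem_filter, Finset.mem_powerset]

def stepEquiv (m : ℕ) :
    {s : Finset ℕ // s ⊆ Finset.Icc 1 (m+2) ∧ ∀ x ∈ s, x + 1 ∉ s}
      ≃ ({s : Finset ℕ // s ⊆ Finset.Icc 1 (m+1) ∧ ∀ x ∈ s, x + 1 ∉ s}
        ⊕ {s : Finset ℕ // s ⊆ Finset.Icc 1 m ∧ ∀ x ∈ s, x + 1 ∉ s}) where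
  toFun x :=
    if h : m + 2 ∈ x.1 then
      Sum.inr ⟨x.1.erase (m+2), by
        obtain ⟨hs, hnc⟩ := x.2
        constructor
        · intro y hy
          rw [Finset.mem_erase] at hy
          have h1 := hs hy.2
          rw [Finset.mem_Icc] at h1 ⊢
          have : y ≠ m + 1 := by
            intro he
            exact hnc y hy.2 (by rw [he]; exact h)
          omega
        · intro y hy
          rw [Finset.mem_erase] at hy
          intro hc
          exact x.2.2 y hy.2 (Finset.mem_of_mem_erase hc)⟩
    else
      Sum.inl ⟨x.1, by
        obtain ⟨hs, hnc⟩ := x.2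
        refine ⟨fun y hy => ?_, hnc⟩
        have h1 := hs hy
        rw [Finset.mem_Icc] at h1 ⊢
        have : y ≠ m + 2 := fun he => h (he ▸ hy)
        omega⟩
  invFun y :=
    match y with
    | Sum.inl s => ⟨s.1, ⟨fun x hx => by
        have := s.2.1 hx; rw [Finset.mem_Icc] at this ⊢; omega, s.2.2⟩⟩
    | Sum.inr s => ⟨insert (m+2) s.1, by
        obtain ⟨hs, hnc⟩ := s.2
        constructor
        · intro y hy
          rw [Finset.mem_insert] at hy
          rcases hy with rfl|hy
          · rw [Finset.mem_Icc]; omega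
          · have := hs hy; rw [Finset.mem_Icc] at this ⊢; omega
        · intro y hy
          rw [Finset.mem_insert] at hy
          intro hc
          rw [Finset.mem_insert] at hc
          rcases hy with rfl|hy
          · rcases hc with hc|hc
            · omega
            · have := hs hc; rw [Finset.mem_Icc] at this; omega
          · rcases hc with hc|hc
            · have := hs hy; rw [Finset.mem_Icc] at this; omega
            · exact hnc y hy hc⟩
  left_inv x := by
    by_cases h : m + 2 ∈ x.1
    · simp only [h, dif_pos]
      exact Subtype.ext (Finset.insert_erase h)
    · simp only [h, dif_neg, not_false_iff]
  right_inv y := by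
    match y with
    | Sum.inl s =>
      have h : m + 2 ∉ s.1 := by
        intro hc
        have := s.2.1 hc; rw [Finset.mem_Icc] at this; omega
      simp only [h, dif_neg, not_false_iff]
    | Sum.inr s =>
      have h : m + 2 ∉ s.1 := by
        intro hc
        have := s.2.1 hc; rw [Finset.mem_Icc] at this; omega
      simp only [Finset.mem_insert_self, dif_pos]
      congr 1
      exact Subtype.ext (Finset.erase_insert h)

lemma card_noconsec (m : ℕ) :
    Nat.card {s : Finset ℕ // s ⊆ Finset.Icc 1 m ∧ ∀ x ∈ s, x + 1 ∉ s}
      = Nat.fib (m + 2) := by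
  induction m using Nat.twoStepInduction with
  | zero => rw [card_filter_eq]; decide
  | one => rw [card_filter_eq]; decide
  | more m ih2 ih1 =>
    have f1 := finite_noconsec (m+1) (fun s => ∀ x ∈ s, x + 1 ∉ s)
    have f2 := finite_noconsec m (fun s => ∀ x ∈ s, x + 1 ∉ s)
    rw [Nat.card_congr (stepEquiv m), Nat.card_sum, ih1, ih2]
    have h4 : Nat.fib (m+2+2) = Nat.fib (m+2) + Nat.fib (m+2+1) := Nat.fib_add_two
    have h3 : Nat.fib (m+1+2) = Nat.fib (m+2+1) := rfl
    rw [h4, h3]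
    exact Nat.add_comm _ _
/-! ### Part 2: ZMod cast helpers -/

section Part2
variable {n : ℕ}

lemma val_cast_le {a : ℕ} (ha : a ≤ n) : ((a : ZMod (n+1))).val = a :=
  ZMod.val_cast_of_lt (by omega)

lemma cast_inj_le {a b : ℕ} (ha : a ≤ n) (hb : b ≤ n)
    (h : (a : ZMod (n+1)) = (b : ZMod (n+1))) : a = b := by
  have := congrArg ZMod.val h
  rwa [val_cast_le ha, val_cast_le hb] at this

lemma cast_val_eq (i : ZMod (n+1)) : ((i.val : ℕ) : ZMod (n+1)) = i :=
  ZMod.natCast_rightInverse i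

lemma val_le (i : ZMod (n+1)) : i.val ≤ n := by
  have := ZMod.val_lt i; omega

lemma cast_sub_le {a b : ℕ} (h : b ≤ a) :
    ((a - b : ℕ) : ZMod (n+1)) = (a : ZMod (n+1)) - (b : ℕ) := Nat.cast_sub h

/-! ### next/previous valley functions -/

def nxt (n : ℕ) (s : Finset ℕ) (j : ℕ) : ℕ :=
  (insert n (s.filter fun x => j < x)).min' (Finset.insert_nonempty _ _)

def pv (s : Finset ℕ) (j : ℕ) : ℕ :=
  (insert 0 (s.filter fun x => x < j)).max' (Finset.insert_nonempty _ _)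

def Good (n : ℕ) (s : Finset ℕ) : Prop :=
  s ⊆ Finset.Icc 1 (n-1) ∧ ∀ x ∈ s, x + 1 ∉ s

def cOf (n : ℕ) (s : Finset ℕ) : ZMod (n+1) → ℕ :=
  fun i => nxt n s i.val - i.val + 1

def vOf (n : ℕ) (c : ZMod (n+1) → ℕ) : Finset ℕ :=
  (Finset.Icc 1 (n-1)).filter fun p => c (((p - 1 : ℕ) : ZMod (n+1))) = 2

def rv (n : ℕ) (s : Finset ℕ) : Finset ℕ := s.image (n - ·)

variable {s : Finset ℕ} {j : ℕ}

lemma good_mem {x : ℕ} (hg : Good n s) (hx : x ∈ s) : 1 ≤ x ∧ x + 1 ≤ n := by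
  have := hg.1 hx
  rw [Finset.mem_Icc] at this
  omega

lemma nxt_mem : nxt n s j ∈ s ∨ nxt n s j = n := by
  have h := Finset.min'_mem (insert n (s.filter fun x => j < x)) (Finset.insert_nonempty _ _)
  rw [Finset.mem_insert] at h
  rcases h with h | h
  · exact Or.inr h
  · exact Or.inl (Finset.mem_filter.mp h).1

lemma lt_nxt (hj : j < n) : j < nxt n s j := by
  rw [nxt, Finset.lt_min'_iff]
  intro y hy
  rw [Finset.mem_insert] at hy
  rcases hy with rfl | hy
  · exact hj
  · exact (Finset.mem_filter.mp hy).2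

lemma nxt_le_n : nxt n s j ≤ n := by
  exact Finset.min'_le _ n (Finset.mem_insert_self _ _)

lemma nxt_le {x : ℕ} (hx : x ∈ s) (hj : j < x) : nxt n s j ≤ x := by
  have hm : x ∈ insert n (s.filter fun y => j < y) :=
    Finset.mem_insert_of_mem (Finset.mem_filter.mpr ⟨hx, hj⟩)
  exact Finset.min'_le _ x hm

lemma nxt_le_of_mem {y : ℕ} (hy : y ∈ s ∨ y = n) (hjy : j < y) : nxt n s j ≤ y := by
  rcases hy with h | rfl
  · exact nxt_le h hjy
  · exact nxt_le_n

lemma le_nxt (hj : j ≤ n) : j ≤ nxt n s j := by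
  rcases Nat.lt_or_ge j n with h | h
  · exact le_of_lt (lt_nxt h)
  · have hjn : j = n := by omega
    subst hjn
    rw [nxt, Finset.le_min'_iff]
    intro y hy
    rw [Finset.mem_insert] at hy
    rcases hy with rfl | hy
    · exact le_refl _
    · exact le_of_lt (Finset.mem_filter.mp hy).2

lemma nxt_n : nxt n s n = n := by
  refine le_antisymm nxt_le_n ?_
  rw [nxt, Finset.le_min'_iff]
  intro y hy
  rw [Finset.mem_insert] at hy
  rcases hy with rfl | hy
  · exact le_refl _
  · exact le_of_lt (Finset.mem_filter.mp hy).2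

lemma pv_mem : pv s j ∈ s ∨ pv s j = 0 := by
  have h := Finset.max'_mem (insert 0 (s.filter fun x => x < j)) (Finset.insert_nonempty _ _)
  rw [Finset.mem_insert] at h
  rcases h with h | h
  · exact Or.inr h
  · exact Or.inl (Finset.mem_filter.mp h).1

lemma pv_lt (hj : 1 ≤ j) : pv s j < j := by
  rw [pv, Finset.max'_lt_iff]
  intro y hy
  rw [Finset.mem_insert] at hy
  rcases hy with rfl | hy
  · omega
  · exact (Finset.mem_filter.mp hy).2

lemma le_pv {x : ℕ} (hx : x ∈ s) (hj : x < j) : x ≤ pv s j := by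
  have hm : x ∈ insert 0 (s.filter fun y => y < j) :=
    Finset.mem_insert_of_mem (Finset.mem_filter.mpr ⟨hx, hj⟩)
  exact Finset.le_max' _ x hm

lemma nxt_succ_of (hj : j < n) (hj1 : j + 1 ∉ s) (hj2 : j + 1 ≠ n) :
    nxt n s j = nxt n s (j+1) := by
  have hj1n : j + 1 < n := by omega
  refine le_antisymm ?_ ?_
  · exact nxt_le_of_mem nxt_mem (by have := lt_nxt (s := s) hj1n; omega)
  · refine nxt_le_of_mem nxt_mem ?_
    have h1 := lt_nxt (s := s) hj
    rcases nxt_mem (n := n) (s := s) (j := j) with h | h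
    · have h2 : nxt n s j ≠ j + 1 := fun he => hj1 (he ▸ h)
      omega
    · omega

end Part2
/-! ### Structure of the bounce Kupisch series `cOf` -/

section Part2B
variable {n : ℕ} {s : Finset ℕ} {j : ℕ}

lemma cOf_apply (hj : j ≤ n) : cOf n s (j : ZMod (n+1)) = nxt n s j - j + 1 := by
  rw [cOf, val_cast_le hj]

lemma cOf_last : cOf n s ((n : ℕ) : ZMod (n+1)) = 1 := by
  rw [cOf_apply (le_refl n), nxt_n]
  omega

lemma cOf_pos (i : ZMod (n+1)) : 1 ≤ cOf n s i := by
  rw [cOf]; omega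

lemma cOf_two (hg : Good n s) (hj : j + 1 ∈ s) : cOf n s (j : ZMod (n+1)) = 2 := by
  have hb := good_mem hg hj
  have hjn : j < n := by omega
  have h1 : nxt n s j = j + 1 :=
    le_antisymm (nxt_le hj (by omega)) (lt_nxt hjn)
  rw [cOf_apply (by omega), h1]
  omega

/-- descent relation: `c j = c (j+1) + 1` when `j+1` is not a valley. -/
lemma cOf_descent (hg : Good n s) (hjn : j < n) (hj : j + 1 ∉ s) :
    cOf n s (j : ZMod (n+1)) = cOf n s ((j+1 : ℕ) : ZMod (n+1)) + 1 := by
  rcases eq_or_ne (j+1) n with he | hne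
  · have h1 : nxt n s j = n := by
      refine le_antisymm nxt_le_n ?_
      rcases nxt_mem (n := n) (s := s) (j := j) with h | h
      · have := good_mem hg h
        have := lt_nxt (s := s) hjn
        have h2 : nxt n s j ≠ j + 1 := fun h3 => hj (h3 ▸ h)
        omega
      · omega
    rw [cOf_apply (by omega), h1, he, cOf_last]
    omega
  · have h1 := nxt_succ_of hjn hj hne
    have h2 := lt_nxt (s := s) (show j + 1 < n by omega)
    rw [cOf_apply (by omega), cOf_apply (by omega), h1]
    omega

lemma cOf_ge_two (hjn : j < n) : 2 ≤ cOf n s (j : ZMod (n+1)) := by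
  have := lt_nxt (s := s) hjn
  rw [cOf_apply (by omega)]
  omega

lemma isLKupisch_cOf (hg : Good n s) : IsLKupisch n (cOf n s) := by
  refine ⟨cOf_pos, ?_, cOf_last, ?_⟩
  · intro i
    have hi : i = ((i.val : ℕ) : ZMod (n+1)) := (cast_val_eq i).symm
    have hv := val_le i
    rcases Nat.lt_or_ge i.val n with h | h
    · rw [hi]
      have hcast : (i.val : ZMod (n+1)) + 1 = ((i.val + 1 : ℕ) : ZMod (n+1)) := by push_cast; ring
      rw [hcast]
      by_cases hs : i.val + 1 ∈ s
      · rw [cOf_two hg hs]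
        have := cOf_ge_two (s := s) (n := n) (j := i.val + 1)
        have := cOf_pos (n := n) (s := s) (((i.val + 1 : ℕ)) : ZMod (n+1))
        omega
      · rw [cOf_descent hg h hs]
    · have hin : i.val = n := by omega
      rw [hi, hin, cOf_last]
      have := cOf_pos (n := n) (s := s) (((n : ℕ) : ZMod (n+1)) + 1)
      omega
  · intro i hi
    have hv := val_le i
    have h : i.val < n := by
      rcases Nat.lt_or_ge i.val n with h | h
      · exact h
      · exfalso; apply hi
        have : i.val = n := by omega
        rw [← cast_val_eq i, this]
    have := cOf_ge_two (s := s) (n := n) (j := i.val) h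
    rwa [cast_val_eq] at this

/-- simple at a descent vertex has projective dimension 1 -/
lemma pdIs_one (hg : Good n s) (hjn : j < n) (hj : j + 1 ∉ s) :
    PdIs (cOf n s) (j : ZMod (n+1)) 1 1 := by
  have hd := cOf_descent hg hjn hj
  have h2 := cOf_ge_two (s := s) (n := n) hjn
  have hstep : PdIs (cOf n s) ((j : ZMod (n+1)) + ((1 : ℕ) : ZMod (n+1)))
      (cOf n s (j : ZMod (n+1)) - 1) 0 := by
    apply PdIs.proj
    have hcast : (j : ZMod (n+1)) + ((1:ℕ) : ZMod (n+1)) = ((j + 1 : ℕ) : ZMod (n+1)) := by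
      push_cast; ring
    rw [hcast]
    omega
  exact PdIs.step _ _ _ (by omega) hstep

lemma pdIs_two (hg : Good n s) (hj : j + 1 ∈ s) :
    PdIs (cOf n s) (j : ZMod (n+1)) 1 2 := by
  have hb := good_mem hg hj
  have hjn : j < n := by omega
  have h2 := cOf_two hg hj
  have hnext : PdIs (cOf n s) ((j + 1 : ℕ) : ZMod (n+1)) 1 1 := by
    apply pdIs_one hg (by omega)
    intro hc
    exact hg.2 (j+1) hj hc
  have hstep : PdIs (cOf n s) ((j : ZMod (n+1)) + ((1 : ℕ) : ZMod (n+1)))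
      (cOf n s (j : ZMod (n+1)) - 1) 1 := by
    have hcast : (j : ZMod (n+1)) + ((1:ℕ) : ZMod (n+1)) = ((j + 1 : ℕ) : ZMod (n+1)) := by
      push_cast; ring
    rw [hcast, h2]
    exact hnext
  exact PdIs.step _ _ _ (by omega) hstep

end Part2B
/-! ### Generic lemmas about the coKupisch series -/

section Part2C
variable {n : ℕ} {c : ZMod (n+1) → ℕ}

lemma up_closed (hk : ∀ i, c i ≤ c (i+1) + 1) (v : ZMod (n+1)) {k d : ℕ}
    (hkd : k ≤ d) (h1 : c (v - (k : ℕ)) ≤ k) : c (v - (d : ℕ)) ≤ d := by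
  induction d with
  | zero =>
    have : k = 0 := by omega
    subst this; exact h1
  | succ d ih =>
    rcases Nat.eq_or_lt_of_le hkd with he | h
    · subst he; exact h1
    · have hd := ih (by omega)
      have he : v - ((d+1 : ℕ) : ZMod (n+1)) + 1 = v - ((d : ℕ) : ZMod (n+1)) := by
        push_cast; ring
      calc c (v - ((d+1 : ℕ) : ZMod (n+1)))
          ≤ c (v - ((d+1 : ℕ) : ZMod (n+1)) + 1) + 1 := hk _
        _ = c (v - ((d : ℕ) : ZMod (n+1))) + 1 := by rw [he]
        _ ≤ d + 1 := by omega

lemma coK_eq_of (hk : ∀ i, c i ≤ c (i+1) + 1) (v : ZMod (n+1)) {d : ℕ}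
    (h1 : 1 ≤ d) (h2 : c (v - (d : ℕ)) ≤ d)
    (h3 : 2 ≤ d → d - 1 < c (v - ((d - 1 : ℕ) : ZMod (n+1)))) : coK c v = d := by
  have hmem : d ∈ {k : ℕ | 1 ≤ k ∧ c (v - (k : ℕ)) ≤ k} := ⟨h1, h2⟩
  have hco : coK c v = sInf {k : ℕ | 1 ≤ k ∧ c (v - (k : ℕ)) ≤ k} := rfl
  rw [hco]
  refine le_antisymm (Nat.sInf_le hmem) ?_
  by_contra h
  push_neg at h
  have hm := Nat.sInf_mem (⟨d, hmem⟩ : Set.Nonempty {k : ℕ | 1 ≤ k ∧ c (v - (k : ℕ)) ≤ k})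
  obtain ⟨hm1, hm2⟩ := hm
  have hup := up_closed hk v (show sInf {k : ℕ | 1 ≤ k ∧ c (v - (k : ℕ)) ≤ k} ≤ d - 1 by omega) hm2
  have h2d : 2 ≤ d := by omega
  have := h3 h2d
  omega

lemma lt_coK (hk : ∀ i, c i ≤ c (i+1) + 1) {v : ZMod (n+1)}
    (hne : ∃ k : ℕ, 1 ≤ k ∧ c (v - (k : ℕ)) ≤ k) {m : ℕ}
    (h1 : 1 ≤ m) (h2 : m < c (v - (m : ℕ))) : m < coK c v := by
  have hco : coK c v = sInf {k : ℕ | 1 ≤ k ∧ c (v - (k : ℕ)) ≤ k} := rfl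
  rw [hco]
  by_contra h
  push_neg at h
  have hm := Nat.sInf_mem (hne : Set.Nonempty {k : ℕ | 1 ≤ k ∧ c (v - (k : ℕ)) ≤ k})
  obtain ⟨hm1, hm2⟩ := hm
  have hup := up_closed hk v (show sInf {k : ℕ | 1 ≤ k ∧ c (v - (k : ℕ)) ≤ k} ≤ m from h) hm2
  omega

lemma coK_set_nonempty_s16 (hlk : IsLKupisch n c) (v : ZMod (n+1)) :
    ∃ k : ℕ, 1 ≤ k ∧ c (v - (k : ℕ)) ≤ k := by
  rcases eq_or_ne v ((n : ℕ) : ZMod (n+1)) with rfl | h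
  · refine ⟨n+1, by omega, ?_⟩
    have h0 : ((n+1 : ℕ) : ZMod (n+1)) = 0 := by
      exact_mod_cast ZMod.natCast_self (n+1)
    rw [h0, sub_zero, hlk.2.2.1]
    omega
  · refine ⟨(v - ((n : ℕ) : ZMod (n+1))).val, ?_, ?_⟩
    · have hne0 : v - ((n : ℕ) : ZMod (n+1)) ≠ 0 := sub_ne_zero.2 h
      have := (ZMod.val_eq_zero _).not.2 hne0
      omega
    · rw [cast_val_eq, sub_sub_cancel, hlk.2.2.1]
      have hne0 : v - ((n : ℕ) : ZMod (n+1)) ≠ 0 := sub_ne_zero.2 h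
      have := (ZMod.val_eq_zero (v - ((n : ℕ) : ZMod (n+1)))).not.2 hne0
      omega

end Part2C

/-! ### coK of the bounce series -/

section Part2D
variable {n : ℕ} {s : Finset ℕ} {v : ℕ}

lemma pv_zero : pv s 0 = 0 := by
  have h : pv s 0 ≤ 0 := by
    show (insert 0 (s.filter fun x => x < 0)).max' (Finset.insert_nonempty _ _) ≤ 0
    apply Finset.max'_le
    intro y hy
    rw [Finset.mem_insert] at hy
    rcases hy with rfl | hy
    · exact le_refl _
    · have := (Finset.mem_filter.mp hy).2; omega
  omega

lemma neg_one_cast : ((n : ℕ) : ZMod (n+1)) = -1 := by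
  have h0 : ((n+1 : ℕ) : ZMod (n+1)) = 0 := by exact_mod_cast ZMod.natCast_self (n+1)
  push_cast at h0
  linear_combination h0

lemma coK_cOf (hg : Good n s) (hv : v ≤ n) :
    coK (cOf n s) ((v : ℕ) : ZMod (n+1)) = v - pv s v + 1 := by
  have hk := (isLKupisch_cOf hg).2.1
  have hcase : pv s v = 0 ∨ (pv s v ∈ s ∧ 1 ≤ pv s v ∧ pv s v < v) := by
    rcases pv_mem (s := s) (j := v) with hm | hm
    · right
      have h1 := good_mem hg hm
      have hv1 : 1 ≤ v := by
        by_contra hc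
        have : v = 0 := by omega
        rw [this, pv_zero] at h1
        omega
      exact ⟨hm, by omega, pv_lt hv1⟩
    · left; exact hm
  set P := pv s v with hP
  refine coK_eq_of hk _ (by omega) ?_ ?_
  · -- c (v - d) ≤ d
    rcases hcase with h0 | ⟨hmem, h1, hlt⟩
    · rw [h0]
      have he : (v : ZMod (n+1)) - ((v - 0 + 1 : ℕ) : ZMod (n+1)) = ((n : ℕ) : ZMod (n+1)) := by
        rw [neg_one_cast]
        push_cast
        rw [Nat.sub_zero]
        push_cast
        ring
      rw [he, cOf_last]
      omega
    · have hd : v - P + 1 ≤ v := by omega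
      have he : (v : ZMod (n+1)) - ((v - P + 1 : ℕ) : ZMod (n+1))
          = ((P - 1 : ℕ) : ZMod (n+1)) := by
        rw [← cast_sub_le hd]
        congr 1
        omega
      rw [he, cOf_two hg (by rwa [Nat.sub_add_cancel h1])]
      omega
  · -- minimality
    intro h2d
    have hPltv : P < v := by
      rcases hcase with h0 | ⟨_, _, hlt⟩
      · omega
      · exact hlt
    have hd1 : v - P + 1 - 1 ≤ v := by omega
    have he : (v : ZMod (n+1)) - ((v - P + 1 - 1 : ℕ) : ZMod (n+1))
        = ((P : ℕ) : ZMod (n+1)) := by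
      rw [← cast_sub_le hd1]
      congr 1
      omega
    rw [he, cOf_apply (by omega)]
    have hnge : v ≤ nxt n s P := by
      rcases nxt_mem (n := n) (s := s) (j := P) with h | h
      · by_contra hc
        push_neg at hc
        have := le_pv h hc
        have := lt_nxt (s := s) (show P < n by omega)
        omega
      · omega
    have := le_nxt (s := s) (show P ≤ n by omega)
    omega

end Part2D

/-! ### The opposite algebra of a bounce series -/

section Part2E
variable {n : ℕ} {s : Finset ℕ}

lemma good_rv (hg : Good n s) : Good n (rv n s) := by
  constructor
  · intro y hy
    rw [rv, Finset.mem_image] at hy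
    obtain ⟨x, hx, rfl⟩ := hy
    have := good_mem hg hx
    rw [Finset.mem_Icc]
    omega
  · intro y hy hc
    rw [rv, Finset.mem_image] at hy hc
    obtain ⟨x, hx, rfl⟩ := hy
    obtain ⟨z, hz, hzc⟩ := hc
    have hbx := good_mem hg hx
    have hbz := good_mem hg hz
    have : z + 1 = x := by omega
    exact hg.2 z hz (this ▸ hx)

lemma rv_empty : rv n (∅ : Finset ℕ) = ∅ := by
  rw [rv, Finset.image_empty]

lemma nxt_rv (hg : Good n s) {j : ℕ} (hj : j ≤ n) :
    nxt n (rv n s) j = n - pv s (n - j) := by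
  rcases Nat.eq_or_lt_of_le hj with rfl | hjn
  · rw [nxt_n, Nat.sub_self, pv_zero, Nat.sub_zero]
  refine le_antisymm ?_ ?_
  · rcases pv_mem (s := s) (j := n - j) with hm | hm
    · have hb := good_mem hg hm
      have hlt : pv s (n-j) < n - j := pv_lt (by omega)
      refine nxt_le_of_mem (Or.inl ?_) (by omega)
      rw [rv, Finset.mem_image]
      exact ⟨pv s (n-j), hm, rfl⟩
    · rw [hm, Nat.sub_zero]
      exact nxt_le_n
  · rcases nxt_mem (n := n) (s := rv n s) (j := j) with hm | hm
    · have hlt : j < nxt n (rv n s) j := lt_nxt hjn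
      set X := nxt n (rv n s) j with hX
      rw [rv, Finset.mem_image] at hm
      obtain ⟨x, hx, hxe⟩ := hm
      have hb := good_mem hg hx
      have hple : x ≤ pv s (n - j) := le_pv hx (by omega)
      omega
    · rw [hm]
      have := pv_lt (s := s) (j := n - j) (by omega)
      omega

lemma copOf_cOf (hg : Good n s) : copOf n (cOf n s) = cOf n (rv n s) := by
  funext i
  have hv := val_le i
  rw [copOf]
  have he : ((n : ℕ) : ZMod (n+1)) - i = ((n - i.val : ℕ) : ZMod (n+1)) := by
    rw [cast_sub_le (val_le i), cast_val_eq]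
  rw [he, coK_cOf hg (by omega), cOf]
  rw [nxt_rv hg hv]
  have h1 : pv s (n - i.val) ≤ n - i.val := by
    rcases Nat.eq_zero_or_pos (n - i.val) with h | h
    · rw [h, pv_zero]
    · exact le_of_lt (pv_lt h)
  omega

end Part2E

/-! ### CoSyz inversion lemmas -/

section Part2F
variable {n : ℕ} {c : ZMod (n+1) → ℕ}

lemma cosyz_zero {a : ZMod (n+1)} {k : ℕ} {a' : ZMod (n+1)} {k' : ℕ}
    (h : CoSyz c a k 0 a' k') : a' = a ∧ k' = k := by
  cases h
  exact ⟨rfl, rfl⟩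

lemma cosyz_succ {a : ZMod (n+1)} {k l : ℕ} {a'' : ZMod (n+1)} {k'' : ℕ}
    (h : CoSyz c a k (l+1) a'' k'') :
    ∃ (a' : ZMod (n+1)) (k' : ℕ), CoSyz c a k l a' k' ∧ k' < coK c a' ∧
      a'' = a' - (k' : ℕ) ∧ k'' = coK c a' - k' := by
  cases h with
  | step s k l s' k' => exact ⟨_, _, s', k', rfl, rfl⟩

lemma cosyz_one_iff {a : ZMod (n+1)} {k : ℕ} {a' : ZMod (n+1)} :
    (∃ m, CoSyz c a k 1 a' m) ↔ (k < coK c a ∧ a' = a - (k : ℕ)) := by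
  constructor
  · rintro ⟨m, h⟩
    obtain ⟨b, k', h0, hlt, he1, _⟩ := cosyz_succ h
    obtain ⟨rfl, rfl⟩ := cosyz_zero h0
    exact ⟨hlt, he1⟩
  · rintro ⟨h1, rfl⟩
    exact ⟨coK c a - k, CoSyz.step a k 0 a k (CoSyz.zero a k) h1⟩

lemma cosyz_two_iff {a : ZMod (n+1)} {k : ℕ} {a'' : ZMod (n+1)} :
    (∃ m, CoSyz c a k 2 a'' m) ↔
      (k < coK c a ∧ coK c a - k < coK c (a - (k : ℕ)) ∧
        a'' = a - (k : ℕ) - ((coK c a - k : ℕ) : ZMod (n+1))) := by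
  constructor
  · rintro ⟨m, h⟩
    obtain ⟨b, k', h1, hlt, he1, he2⟩ := cosyz_succ h
    obtain ⟨b0, k0, h0, hlt0, hb, hk⟩ := cosyz_succ h1
    obtain ⟨rfl, rfl⟩ := cosyz_zero h0
    subst hb
    subst hk
    exact ⟨hlt0, hlt, he1⟩
  · rintro ⟨h1, h2, he⟩
    subst he
    have hs1 : CoSyz c a k 1 (a - (k:ℕ)) (coK c a - k) :=
      CoSyz.step a k 0 a k (CoSyz.zero a k) h1
    exact ⟨_, CoSyz.step a k 1 _ _ hs1 h2⟩

end Part2F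
/-! ### extDim computations for the bounce series -/

section Part2G
variable {n : ℕ} {s : Finset ℕ} {j : ℕ}

lemma pv_le : pv s j ≤ j := by
  rcases Nat.eq_zero_or_pos j with rfl | h
  · rw [pv_zero]
  · exact le_of_lt (pv_lt h)

lemma pv_empty : pv (∅ : Finset ℕ) j = 0 := by
  rcases pv_mem (s := (∅ : Finset ℕ)) (j := j) with h | h
  · exact absurd h (Finset.notMem_empty _)
  · exact h

lemma soc_eq (hj : j ≤ n) :
    ((j : ℕ) : ZMod (n+1)) + ((cOf n s ((j : ℕ) : ZMod (n+1)) : ℕ) : ZMod (n+1)) - 1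
      = ((nxt n s j : ℕ) : ZMod (n+1)) := by
  rw [cOf_apply hj]
  have h1 : j ≤ nxt n s j := le_nxt hj
  rw [show nxt n s j - j + 1 = nxt n s j + 1 - j from by omega,
    cast_sub_le (by omega)]
  push_cast
  ring

lemma extDim_zero_cOf (hg : Good n s) {iv : ℕ} (hiv : iv ≤ n) (h1 : iv ∉ s) (h2 : iv ≠ n) :
    extDim (cOf n s) ((iv : ℕ) : ZMod (n+1)) 0 = 0 := by
  rw [extDim]
  have he : IsEmpty {r : ZMod (n+1) // ∃ m,
      CoSyz (cOf n s) (r + (cOf n s r : ℕ) - 1) (cOf n s r) 0 ((iv : ℕ) : ZMod (n+1)) m} := by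
    refine ⟨fun x => ?_⟩
    obtain ⟨r, hm⟩ := x
    obtain ⟨j, hj, rfl⟩ : ∃ j, j ≤ n ∧ ((j : ℕ) : ZMod (n+1)) = r :=
      ⟨r.val, val_le r, cast_val_eq r⟩
    obtain ⟨m, h⟩ := hm
    obtain ⟨heq, _⟩ := cosyz_zero h
    rw [soc_eq hj] at heq
    have := cast_inj_le hiv nxt_le_n heq
    rcases nxt_mem (n := n) (s := s) (j := j) with h | h
    · exact h1 (this ▸ h)
    · exact h2 (by omega)
  exact Nat.card_of_isEmpty

lemma ext1_char (hg : Good n s) {iv : ℕ} (hj : j ≤ n) (hiv : iv ≤ n) :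
    (∃ m, CoSyz (cOf n s)
        (((j : ℕ) : ZMod (n+1)) + ((cOf n s ((j : ℕ) : ZMod (n+1)) : ℕ) : ZMod (n+1)) - 1)
        (cOf n s ((j : ℕ) : ZMod (n+1))) 1 ((iv : ℕ) : ZMod (n+1)) m)
      ↔ (pv s (nxt n s j) < j ∧ iv = j - 1) := by
  rw [cosyz_one_iff, soc_eq hj, cOf_apply hj, coK_cOf hg nxt_le_n]
  have hple : pv s (nxt n s j) ≤ nxt n s j := pv_le
  have hjle : j ≤ nxt n s j := le_nxt hj
  constructor
  · rintro ⟨hlt, he⟩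
    have hpv : pv s (nxt n s j) < j := by omega
    have hj1 : 1 ≤ j := by omega
    refine ⟨hpv, ?_⟩
    have he2 : ((nxt n s j : ℕ) : ZMod (n+1)) - ((nxt n s j - j + 1 : ℕ) : ZMod (n+1))
        = ((j - 1 : ℕ) : ZMod (n+1)) := by
      rw [← cast_sub_le (show nxt n s j - j + 1 ≤ nxt n s j from by omega)]
      congr 1
      omega
    rw [he2] at he
    exact cast_inj_le hiv (by omega) he
  · rintro ⟨hpv, rfl⟩
    have hj1 : 1 ≤ j := by omega
    refine ⟨by omega, ?_⟩
    rw [← cast_sub_le (show nxt n s j - j + 1 ≤ nxt n s j from by omega)]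
    congr 1
    omega

lemma extDim_one_empty {iv : ℕ} (hg : Good n (∅ : Finset ℕ)) (hiv : iv < n) :
    extDim (cOf n (∅ : Finset ℕ)) ((iv : ℕ) : ZMod (n+1)) 1 = 1 := by
  rw [extDim]
  have hx0 : ∃ m, CoSyz (cOf n ∅)
      ((((iv+1 : ℕ)) : ZMod (n+1)) + ((cOf n ∅ (((iv+1 : ℕ)) : ZMod (n+1)) : ℕ) : ZMod (n+1)) - 1)
      (cOf n ∅ (((iv+1 : ℕ)) : ZMod (n+1))) 1 ((iv : ℕ) : ZMod (n+1)) m := by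
    rw [ext1_char hg (by omega) (by omega)]
    rw [pv_empty]
    omega
  haveI : Unique {r : ZMod (n+1) // ∃ m,
      CoSyz (cOf n ∅) (r + (cOf n ∅ r : ℕ) - 1) (cOf n ∅ r) 1 ((iv : ℕ) : ZMod (n+1)) m} := by
    refine ⟨⟨⟨((iv+1 : ℕ) : ZMod (n+1)), hx0⟩⟩, ?_⟩
    rintro ⟨r, hm⟩
    obtain ⟨j, hj, rfl⟩ : ∃ j, j ≤ n ∧ ((j : ℕ) : ZMod (n+1)) = r :=
      ⟨r.val, val_le r, cast_val_eq r⟩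
    rw [ext1_char hg hj (by omega), pv_empty] at hm
    have : j = iv + 1 := by omega
    subst this
    rfl
  exact Nat.card_unique

end Part2G
/-! ### level-2 extDim for the bounce series -/

section Part2H
variable {n : ℕ} {s : Finset ℕ} {j : ℕ}

lemma ext2_char (hg : Good n s) {iv : ℕ} (hj : j ≤ n) (hiv : iv ≤ n) :
    (∃ m, CoSyz (cOf n s)
        (((j : ℕ) : ZMod (n+1)) + ((cOf n s ((j : ℕ) : ZMod (n+1)) : ℕ) : ZMod (n+1)) - 1)
        (cOf n s ((j : ℕ) : ZMod (n+1))) 2 ((iv : ℕ) : ZMod (n+1)) m)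
      ↔ (1 ≤ pv s (nxt n s j) ∧ pv s (nxt n s j) < j ∧
          pv s (j - 1) < pv s (nxt n s j) ∧ iv = pv s (nxt n s j) - 1) := by
  have hple : pv s (nxt n s j) ≤ nxt n s j := pv_le
  have hjle : j ≤ nxt n s j := le_nxt hj
  set P := pv s (nxt n s j) with hP
  rw [cosyz_two_iff, soc_eq hj, cOf_apply hj, coK_cOf hg nxt_le_n, ← hP]
  rcases Nat.eq_zero_or_pos j with rfl | hj1
  · constructor
    · rintro ⟨hlt, _⟩
      exfalso
      omega
    · rintro ⟨_, hlt, _⟩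
      exfalso
      omega
  · -- j ≥ 1
    have hcast1 : ((nxt n s j : ℕ) : ZMod (n+1)) - ((nxt n s j - j + 1 : ℕ) : ZMod (n+1))
        = ((j - 1 : ℕ) : ZMod (n+1)) := by
      rw [← cast_sub_le (show nxt n s j - j + 1 ≤ nxt n s j from by omega)]
      congr 1
      omega
    have hnat1 : nxt n s j - P + 1 - (nxt n s j - j + 1) = j - P := by omega
    rw [hcast1, hnat1, coK_cOf hg (show j - 1 ≤ n from by omega)]
    have hpvle : pv s (j-1) ≤ j - 1 := pv_le
    rcases Nat.eq_zero_or_pos P with hP0 | hP1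
    · constructor
      · rintro ⟨hlt1, hlt2, _⟩
        exfalso
        omega
      · rintro ⟨h1, _, _, _⟩
        exfalso
        omega
    rcases Nat.lt_or_ge P j with hPj | hPj
    case inr =>
      constructor
      · rintro ⟨hlt1, _, _⟩
        exfalso
        omega
      · rintro ⟨_, h2, _, _⟩
        exfalso
        omega
    · have hcast2 : ((j - 1 : ℕ) : ZMod (n+1)) - ((j - P : ℕ) : ZMod (n+1))
          = ((P - 1 : ℕ) : ZMod (n+1)) := by
        rw [← cast_sub_le (show j - P ≤ j - 1 from by omega)]
        congr 1
        omega
      rw [hcast2]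
      constructor
      · rintro ⟨hlt1, hlt2, he⟩
        exact ⟨hP1, by omega, by omega, cast_inj_le hiv (by omega) he⟩
      · rintro ⟨_, hlt1, hlt2, rfl⟩
        exact ⟨by omega, by omega, rfl⟩

lemma pv_nxt_succ (hg : Good n s) {p : ℕ} (hp : p ∈ s) : pv s (nxt n s (p+1)) = p := by
  have hb := good_mem hg hp
  have h1 : p + 1 ≤ nxt n s (p+1) := le_nxt (by omega)
  have hge : p ≤ pv s (nxt n s (p+1)) := le_pv hp (by omega)
  refine le_antisymm ?_ hge
  rcases pv_mem (s := s) (j := nxt n s (p+1)) with hm | hm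
  · by_contra hc
    push_neg at hc
    have hne : pv s (nxt n s (p+1)) ≠ p + 1 := by
      intro he
      exact hg.2 p hp (he ▸ hm)
    have hlt : pv s (nxt n s (p+1)) < nxt n s (p+1) := pv_lt (by omega)
    have := nxt_le (n := n) hm (show p + 1 < pv s (nxt n s (p+1)) from by omega)
    omega
  · omega

lemma extDim_one_valley (hg : Good n s) {p : ℕ} (hp : p ∈ s) :
    extDim (cOf n s) (((p - 1 : ℕ)) : ZMod (n+1)) 1 = 0 := by
  have hb := good_mem hg hp
  rw [extDim]
  have he : IsEmpty {r : ZMod (n+1) // ∃ m,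
      CoSyz (cOf n s) (r + (cOf n s r : ℕ) - 1) (cOf n s r) 1 (((p-1 : ℕ)) : ZMod (n+1)) m} := by
    refine ⟨fun x => ?_⟩
    obtain ⟨r, hm⟩ := x
    obtain ⟨j, hj, rfl⟩ : ∃ j, j ≤ n ∧ ((j : ℕ) : ZMod (n+1)) = r :=
      ⟨r.val, val_le r, cast_val_eq r⟩
    rw [ext1_char hg hj (by omega)] at hm
    obtain ⟨hpv, hje⟩ := hm
    have hjp : j = p := by omega
    subst hjp
    have h1 : j < nxt n s j := lt_nxt (by omega)
    have := le_pv hp h1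
    omega
  exact Nat.card_of_isEmpty

lemma extDim_two_valley (hg : Good n s) {p : ℕ} (hp : p ∈ s) :
    extDim (cOf n s) (((p - 1 : ℕ)) : ZMod (n+1)) 2 = 1 := by
  have hb := good_mem hg hp
  rw [extDim]
  have hx0 : ∃ m, CoSyz (cOf n s)
      ((((p+1 : ℕ)) : ZMod (n+1)) + ((cOf n s (((p+1 : ℕ)) : ZMod (n+1)) : ℕ) : ZMod (n+1)) - 1)
      (cOf n s (((p+1 : ℕ)) : ZMod (n+1))) 2 (((p-1 : ℕ)) : ZMod (n+1)) m := by
    rw [ext2_char hg (by omega) (by omega), pv_nxt_succ hg hp]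
    have : pv s (p + 1 - 1) < p := pv_lt (by omega)
    omega
  haveI : Unique {r : ZMod (n+1) // ∃ m,
      CoSyz (cOf n s) (r + (cOf n s r : ℕ) - 1) (cOf n s r) 2 (((p-1 : ℕ)) : ZMod (n+1)) m} := by
    refine ⟨⟨⟨(((p+1 : ℕ)) : ZMod (n+1)), hx0⟩⟩, ?_⟩
    rintro ⟨r, hm⟩
    obtain ⟨j, hj, rfl⟩ : ∃ j, j ≤ n ∧ ((j : ℕ) : ZMod (n+1)) = r :=
      ⟨r.val, val_le r, cast_val_eq r⟩
    rw [ext2_char hg hj (by omega)] at hm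
    obtain ⟨hP1, hPj, hpvlt, hiv⟩ := hm
    have hPp : pv s (nxt n s j) = p := by omega
    have hjp : j = p + 1 := by
      by_contra hc
      have hgt : p < j - 1 := by omega
      have := le_pv hp hgt
      omega
    subst hjp
    rfl
  exact Nat.card_unique

end Part2H
/-! ### PdIs inversion and regularity of bounce series -/

section Part2I
variable {n : ℕ} {c : ZMod (n+1) → ℕ} {s : Finset ℕ}

lemma pdIs_one_inv {i : ZMod (n+1)} (h : PdIs c i 1 1) :
    1 < c i ∧ c i - 1 = c (i + ((1 : ℕ) : ZMod (n+1))) := by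
  cases h with
  | step i k m hk h' =>
    cases h' with
    | proj i k hp => exact ⟨hk, hp⟩

lemma pdIs_two_inv {i : ZMod (n+1)} (h : PdIs c i 1 2) :
    1 < c i ∧ c i - 1 < c (i + ((1 : ℕ) : ZMod (n+1))) ∧
      c (i + ((1 : ℕ) : ZMod (n+1))) - (c i - 1)
        = c (i + ((1 : ℕ) : ZMod (n+1)) + ((c i - 1 : ℕ) : ZMod (n+1))) := by
  cases h with
  | step i k m hk h' =>
    cases h' with
    | step i' k' m' hk' h'' =>
      cases h'' with
      | proj i'' k'' hp => exact ⟨hk, hk', hp⟩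

lemma regular1_cOf (hg : Good n (∅ : Finset ℕ)) (i : ZMod (n+1))
    (h : PdIs (cOf n ∅) i 1 1) : IsRegular (cOf n ∅) 1 i := by
  obtain ⟨h1, _⟩ := pdIs_one_inv h
  have hv := val_le i
  have hjn : i.val < n := by
    rcases Nat.eq_or_lt_of_le hv with he | hlt
    · exfalso
      rw [← cast_val_eq i, he, cOf_last] at h1
      omega
    · exact hlt
  refine ⟨h, ?_, ?_⟩
  · intro l hl
    have hl0 : l = 0 := by omega
    subst hl0
    rw [← cast_val_eq i]
    exact extDim_zero_cOf hg (by omega) (Finset.notMem_empty _) (by omega)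
  · rw [← cast_val_eq i]
    exact extDim_one_empty hg hjn

lemma pd_two_mem (hg : Good n s) {i : ZMod (n+1)} (h : PdIs (cOf n s) i 1 2) :
    i.val + 1 ∈ s := by
  obtain ⟨h1, h2, _⟩ := pdIs_two_inv h
  have hv := val_le i
  have hjn : i.val < n := by
    rcases Nat.eq_or_lt_of_le hv with he | hlt
    · exfalso
      rw [← cast_val_eq i, he, cOf_last] at h1
      omega
    · exact hlt
  by_contra hc
  have hd := cOf_descent hg hjn hc
  rw [← cast_val_eq i] at h2
  have hcast : ((i.val : ℕ) : ZMod (n+1)) + ((1 : ℕ) : ZMod (n+1))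
      = ((i.val + 1 : ℕ) : ZMod (n+1)) := by push_cast; ring
  rw [hcast] at h2
  rw [← cast_val_eq i] at h1
  omega

lemma regular2_cOf (hg : Good n s) (i : ZMod (n+1))
    (h : PdIs (cOf n s) i 1 2) : IsRegular (cOf n s) 2 i := by
  have hp := pd_two_mem hg h
  have hb := good_mem hg hp
  have hie : i = (((i.val + 1 - 1 : ℕ)) : ZMod (n+1)) := by
    rw [Nat.add_sub_cancel, cast_val_eq]
  refine ⟨h, ?_, ?_⟩
  · intro l hl
    interval_cases l
    · rw [hie]
      have hns : i.val ∉ s := by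
        intro hc
        exact hg.2 i.val hc hp
      exact extDim_zero_cOf hg (by omega) (by rwa [Nat.add_sub_cancel]) (by omega)
    · rw [hie]
      exact extDim_one_valley hg hp
  · rw [hie]
    exact extDim_two_valley hg hp

lemma resGor_cOf (hg : Good n s) : ResGorLE2 n (cOf n s) := by
  rcases Nat.eq_zero_or_pos n with rfl | hn
  · left
    intro i
    have hs : s = ∅ := by
      have := hg.1
      simpa using Finset.subset_empty.mp (by simpa using this)
    have hv : i.val = 0 := by have := val_le i; omega
    rw [cOf, hv, show nxt 0 s 0 = 0 from nxt_n]
  by_cases hs : s = ∅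
  · subst hs
    right; left
    refine ⟨?_, ?_, regular1_cOf hg, ?_⟩
    · intro i
      have hv := val_le i
      rcases Nat.eq_or_lt_of_le hv with he | hlt
      · left
        rw [← cast_val_eq i, he]
        exact cOf_last
      · right
        rw [← cast_val_eq i]
        exact pdIs_one hg hlt (Finset.notMem_empty _)
    · exact ⟨((0 : ℕ) : ZMod (n+1)), pdIs_one hg hn (Finset.notMem_empty _)⟩
    · rw [copOf_cOf hg, rv_empty]
      exact regular1_cOf hg
  · right; right
    obtain ⟨p, hp⟩ := Finset.nonempty_iff_ne_empty.mpr hs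
    have hb := good_mem hg hp
    refine ⟨?_, ?_, regular2_cOf hg, ?_⟩
    · intro i
      have hv := val_le i
      rcases Nat.eq_or_lt_of_le hv with he | hlt
      · left
        rw [← cast_val_eq i, he]
        exact cOf_last
      · by_cases hmem : i.val + 1 ∈ s
        · right; right
          rw [← cast_val_eq i]
          exact pdIs_two hg hmem
        · right; left
          rw [← cast_val_eq i]
          exact pdIs_one hg hlt hmem
    · refine ⟨(((p - 1 : ℕ)) : ZMod (n+1)), pdIs_two hg ?_⟩
      rwa [show p - 1 + 1 = p from by omega]
    · rw [copOf_cOf hg]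
      exact regular2_cOf (good_rv hg)

end Part2I
/-! ### Destruct direction: ResGorLE2 forces the bounce shape -/

section Part2J
variable {n : ℕ} {c : ZMod (n+1) → ℕ}

lemma cast_sub_cast {a b t : ℕ} (hb : b ≤ a) (ht : a - b = t) :
    (a : ZMod (n+1)) - ((b : ℕ) : ZMod (n+1)) = ((t : ℕ) : ZMod (n+1)) := by
  rw [← cast_sub_le hb, ht]

lemma cast_add_nat (a b : ℕ) :
    ((a : ℕ) : ZMod (n+1)) + ((b : ℕ) : ZMod (n+1)) = ((a + b : ℕ) : ZMod (n+1)) := by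
  push_cast; ring

lemma cast_add_sub_one {a b : ℕ} (hb : 1 ≤ b) :
    ((a : ℕ) : ZMod (n+1)) + ((b : ℕ) : ZMod (n+1)) - 1 = ((a + b - 1 : ℕ) : ZMod (n+1)) := by
  rw [cast_add_nat]
  have : ((a + b - 1 : ℕ) : ZMod (n+1)) = ((a + b : ℕ) : ZMod (n+1)) - ((1 : ℕ) : ZMod (n+1)) :=
    cast_sub_le (by omega)
  rw [this]
  push_cast
  ring

lemma kup_chain (h1 : IsLKupisch n c) (k : ℕ) : c (((n - k : ℕ)) : ZMod (n+1)) ≤ k + 1 := by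
  induction k with
  | zero => rw [Nat.sub_zero, h1.2.2.1]
  | succ k ih =>
    rcases Nat.lt_or_ge k n with h | h
    · have he : (((n - (k+1) : ℕ)) : ZMod (n+1)) + 1 = (((n - k : ℕ)) : ZMod (n+1)) := by
        have : (n - (k+1)) + 1 = n - k := by omega
        rw [← this, ← cast_add_nat]
        push_cast
        ring
      have := h1.2.1 (((n - (k+1) : ℕ)) : ZMod (n+1))
      rw [he] at this
      omega
    · have : n - (k+1) = n - k := by omega
      rw [this]
      omega

lemma kup_bound (h1 : IsLKupisch n c) {j : ℕ} (hj : j ≤ n) :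
    c ((j : ℕ) : ZMod (n+1)) ≤ n + 1 - j := by
  have := kup_chain h1 (n - j)
  rw [show n - (n - j) = j from by omega] at this
  omega

lemma not_pd2_big (h1 : IsLKupisch n c) {j : ℕ} (hj : j < n)
    (hC : 3 ≤ c ((j : ℕ) : ZMod (n+1)))
    (h2 : c ((j : ℕ) : ZMod (n+1)) - 1 < c (((j+1 : ℕ)) : ZMod (n+1)))
    (h3 : c (((j+1 : ℕ)) : ZMod (n+1)) - (c ((j : ℕ) : ZMod (n+1)) - 1)
        = c (((j + c ((j : ℕ) : ZMod (n+1)) : ℕ)) : ZMod (n+1)))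
    (hreg : extDim c ((j : ℕ) : ZMod (n+1)) 2 = 1) : False := by
  have hk := h1.2.1
  set C := c ((j : ℕ) : ZMod (n+1)) with hCdef
  set C' := c (((j+1 : ℕ)) : ZMod (n+1)) with hC'def
  have hCC' : C ≤ C' := by omega
  have hC'le : C' ≤ n - j := by
    have := kup_bound h1 (show j + 1 ≤ n from by omega)
    rw [← hC'def] at this
    omega
  have hun : j + C ≤ n := by omega
  have hcu : c (((j + C : ℕ)) : ZMod (n+1)) = C' - C + 1 := by omega
  -- the coKupisch value at j + C'
  have hcoKA : coK c (((j + C' : ℕ)) : ZMod (n+1)) = C' := by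
    refine coK_eq_of hk _ (by omega) ?_ ?_
    · rw [cast_sub_cast (by omega) (by omega : j + C' - C' = j), ← hCdef]
      omega
    · intro h2d
      rw [cast_sub_cast (by omega) (by omega : j + C' - (C' - 1) = j + 1), ← hC'def]
      omega
  -- the coKupisch value at the socle of r_B
  set cB := c (((j + C - 1 : ℕ)) : ZMod (n+1)) with hcBdef
  have hcB2 : 2 ≤ cB := by
    have := h1.2.2.2 (((j + C - 1 : ℕ)) : ZMod (n+1)) (by
      intro he
      have := cast_inj_le (show j + C - 1 ≤ n from by omega) (le_refl n) he
      omega)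
    omega
  have hcBle : cB ≤ C' - C + 2 := by
    have hstep := hk (((j + C - 1 : ℕ)) : ZMod (n+1))
    have he : (((j + C - 1 : ℕ)) : ZMod (n+1)) + 1 = (((j + C : ℕ)) : ZMod (n+1)) := by
      rw [show ((1 : ZMod (n+1))) = ((1:ℕ) : ZMod (n+1)) from by push_cast; ring, cast_add_nat]
      congr 1
      omega
    rw [he, hcu] at hstep
    omega
  have hcoKB : coK c (((j + C + cB - 2 : ℕ)) : ZMod (n+1)) = cB + C - 2 := by
    refine coK_eq_of hk _ (by omega) ?_ ?_
    · rw [cast_sub_cast (by omega) (by omega : j + C + cB - 2 - (cB + C - 2) = j), ← hCdef]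
      omega
    · intro h2d
      rw [cast_sub_cast (by omega) (by omega : j + C + cB - 2 - (cB + C - 2 - 1) = j + 1),
        ← hC'def]
      omega
  -- witness A
  have hwA : ∃ m, CoSyz c
      ((((j + C : ℕ)) : ZMod (n+1)) + ((c (((j + C : ℕ)) : ZMod (n+1)) : ℕ) : ZMod (n+1)) - 1)
      (c (((j + C : ℕ)) : ZMod (n+1))) 2 ((j : ℕ) : ZMod (n+1)) m := by
    rw [hcu, cast_add_sub_one (by omega), show j + C + (C' - C + 1) - 1 = j + C' from by omega]
    rw [cosyz_two_iff, hcoKA]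
    refine ⟨by omega, ?_, ?_⟩
    · rw [cast_sub_cast (by omega) (by omega : j + C' - (C' - C + 1) = j + C - 1)]
      rw [show C' - (C' - C + 1) = C - 1 from by omega]
      refine lt_coK hk (coK_set_nonempty_s16 h1 _) (by omega) ?_
      rw [cast_sub_cast (by omega) (by omega : j + C - 1 - (C - 1) = j), ← hCdef]
      omega
    · rw [cast_sub_cast (by omega) (by omega : j + C' - (C' - C + 1) = j + C - 1)]
      rw [show C' - (C' - C + 1) = C - 1 from by omega]
      rw [cast_sub_cast (by omega) (by omega : j + C - 1 - (C - 1) = j)]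
  -- witness B
  have hwB : ∃ m, CoSyz c
      ((((j + C - 1 : ℕ)) : ZMod (n+1)) + ((cB : ℕ) : ZMod (n+1)) - 1)
      cB 2 ((j : ℕ) : ZMod (n+1)) m := by
    rw [cast_add_sub_one (by omega), show j + C - 1 + cB - 1 = j + C + cB - 2 from by omega]
    rw [cosyz_two_iff, hcoKB]
    refine ⟨by omega, ?_, ?_⟩
    · rw [cast_sub_cast (by omega) (by omega : j + C + cB - 2 - cB = j + C - 2)]
      rw [show cB + C - 2 - cB = C - 2 from by omega]
      refine lt_coK hk (coK_set_nonempty_s16 h1 _) (by omega) ?_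
      rw [cast_sub_cast (by omega) (by omega : j + C - 2 - (C - 2) = j), ← hCdef]
      omega
    · rw [cast_sub_cast (by omega) (by omega : j + C + cB - 2 - cB = j + C - 2)]
      rw [show cB + C - 2 - cB = C - 2 from by omega]
      rw [cast_sub_cast (by omega) (by omega : j + C - 2 - (C - 2) = j)]
  -- contradiction with extDim = 1
  rw [extDim] at hreg
  have hsub := (Nat.card_eq_one_iff_unique.mp hreg).1
  have hAB :
      (⟨(((j + C : ℕ)) : ZMod (n+1)), hwA⟩ : {r : ZMod (n+1) // ∃ m,
        CoSyz c (r + (c r : ℕ) - 1) (c r) 2 ((j : ℕ) : ZMod (n+1)) m})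
      = ⟨(((j + C - 1 : ℕ)) : ZMod (n+1)), hwB⟩ := Subsingleton.elim _ _
  have := congrArg Subtype.val hAB
  have := cast_inj_le (show j + C ≤ n from by omega) (show j + C - 1 ≤ n from by omega) this
  omega

end Part2J
/-! ### Destruct: recovering the valley set -/

section Part2K
variable {n : ℕ} {c : ZMod (n+1) → ℕ}

lemma mem_vOf_iff {p : ℕ} :
    p ∈ vOf n c ↔ (1 ≤ p ∧ p ≤ n - 1 ∧ c (((p - 1 : ℕ)) : ZMod (n+1)) = 2) := by
  rw [vOf, Finset.mem_filter, Finset.mem_Icc]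
  tauto

lemma cast_succ (j : ℕ) :
    ((j : ℕ) : ZMod (n+1)) + ((1:ℕ) : ZMod (n+1)) = (((j+1 : ℕ)) : ZMod (n+1)) := by
  push_cast; ring

lemma cOf_ge_two' (h1 : IsLKupisch n c) {j : ℕ} (hj : j < n) :
    2 ≤ c ((j : ℕ) : ZMod (n+1)) := by
  refine h1.2.2.2 _ ?_
  intro he
  have := cast_inj_le (show j ≤ n from by omega) (le_refl n) he
  omega

/-- the structural dichotomy forced by restricted Gorenstein + gldim ≤ 2 -/
lemma destruct_H (h1 : IsLKupisch n c) (h2 : ResGorLE2 n c) {j : ℕ} (hj : j < n) :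
    c ((j : ℕ) : ZMod (n+1)) = c (((j+1 : ℕ)) : ZMod (n+1)) + 1 ∨
      (c ((j : ℕ) : ZMod (n+1)) = 2 ∧ j + 1 < n ∧
        c (((j+2 : ℕ)) : ZMod (n+1)) = c (((j+1 : ℕ)) : ZMod (n+1)) - 1) := by
  have hge2 := cOf_ge_two' h1 hj
  rcases h2 with hall | ⟨hall, _, _, _⟩ | ⟨hall, _, hreg, _⟩
  · exfalso
    have := hall ((j : ℕ) : ZMod (n+1))
    omega
  · rcases hall ((j : ℕ) : ZMod (n+1)) with he | hpd
    · omega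
    · obtain ⟨ha, hb⟩ := pdIs_one_inv hpd
      rw [cast_succ] at hb
      left
      omega
  · rcases hall ((j : ℕ) : ZMod (n+1)) with he | hpd | hpd
    · omega
    · obtain ⟨ha, hb⟩ := pdIs_one_inv hpd
      rw [cast_succ] at hb
      left
      omega
    · obtain ⟨ha, hb, hc⟩ := pdIs_two_inv hpd
      rw [cast_succ] at hb hc
      rcases Nat.lt_or_ge (c ((j : ℕ) : ZMod (n+1))) 3 with hC | hC
      · -- c j = 2
        have hC2 : c ((j : ℕ) : ZMod (n+1)) = 2 := by omega
        right
        have hcast : (((j+1 : ℕ)) : ZMod (n+1))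
            + ((c ((j : ℕ) : ZMod (n+1)) - 1 : ℕ) : ZMod (n+1))
            = (((j+2 : ℕ)) : ZMod (n+1)) := by
          rw [hC2, cast_add_nat]
        rw [hcast] at hc
        have hj1n : j + 1 < n := by
          by_contra hcon
          have hj1 : j + 1 = n := by omega
          have : c (((j+1 : ℕ)) : ZMod (n+1)) = 1 := by rw [hj1]; exact h1.2.2.1
          omega
        exact ⟨hC2, hj1n, by omega⟩
      · exfalso
        have hcast : (((j+1 : ℕ)) : ZMod (n+1))
            + ((c ((j : ℕ) : ZMod (n+1)) - 1 : ℕ) : ZMod (n+1))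
            = (((j + c ((j : ℕ) : ZMod (n+1)) : ℕ)) : ZMod (n+1)) := by
          rw [cast_add_nat]
          congr 1
          omega
        rw [hcast] at hc
        exact not_pd2_big h1 hj hC hb hc ((hreg _ hpd).2.2)

lemma destruct_noconsec (h1 : IsLKupisch n c) (h2 : ResGorLE2 n c) :
    ∀ p ∈ vOf n c, p + 1 ∉ vOf n c := by
  intro p hp hp1
  rw [mem_vOf_iff] at hp hp1
  obtain ⟨hp1le, hpn, hpc⟩ := hp
  obtain ⟨_, hp1n, hp1c⟩ := hp1
  rw [show p + 1 - 1 = p from by omega] at hp1c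
  have hn2 : 2 ≤ n := by omega
  rcases destruct_H h1 h2 (show p - 1 < n from by omega) with hL | ⟨_, _, hR⟩
  · rw [show p - 1 + 1 = p from by omega] at hL
    omega
  · rw [show p - 1 + 2 = p + 1 from by omega, show p - 1 + 1 = p from by omega] at hR
    have := cOf_ge_two' h1 (show p + 1 < n from by omega)
    omega

lemma destruct_value (h1 : IsLKupisch n c) (h2 : ResGorLE2 n c) :
    ∀ k, k ≤ n → c (((n - k : ℕ)) : ZMod (n+1))
      = nxt n (vOf n c) (n - k) - (n - k) + 1 := by
  intro k
  induction k with
  | zero =>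
    intro _
    rw [Nat.sub_zero, h1.2.2.1, nxt_n]
    omega
  | succ k ih =>
    intro hk
    have ihv := ih (by omega)
    set j := n - (k+1) with hjdef
    have hjn : j < n := by omega
    have hj1 : j + 1 = n - k := by omega
    rcases destruct_H h1 h2 hjn with hL | ⟨hc2, hj1n, _⟩
    · rcases Nat.eq_or_lt_of_le (show j + 1 ≤ n from by omega) with he | hlt
      · -- j + 1 = n
        have hnxt : nxt n (vOf n c) j = n := by
          rcases nxt_mem (n := n) (s := vOf n c) (j := j) with hm | hm
          · exfalso
            rw [mem_vOf_iff] at hm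
            have := lt_nxt (s := vOf n c) hjn
            omega
          · exact hm
        have : c (((j+1 : ℕ)) : ZMod (n+1)) = 1 := by rw [he]; exact h1.2.2.1
        rw [hnxt]
        omega
      · -- j + 1 < n
        have hnm : j + 1 ∉ vOf n c := by
          rw [mem_vOf_iff]
          rintro ⟨_, _, hcc⟩
          rw [show j + 1 - 1 = j from by omega] at hcc
          have := cOf_ge_two' h1 hlt
          omega
        have hnxt := nxt_succ_of (s := vOf n c) hjn hnm (by omega)
        rw [← hj1] at ihv
        have := lt_nxt (s := vOf n c) hlt
        rw [hnxt]
        omega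
    · have hmem : j + 1 ∈ vOf n c := by
        rw [mem_vOf_iff, show j + 1 - 1 = j from by omega]
        exact ⟨by omega, by omega, hc2⟩
      have hnxt : nxt n (vOf n c) j = j + 1 :=
        le_antisymm (nxt_le hmem (by omega)) (lt_nxt hjn)
      rw [hnxt, hc2]
      omega

lemma destruct (h1 : IsLKupisch n c) (h2 : ResGorLE2 n c) :
    Good n (vOf n c) ∧ cOf n (vOf n c) = c := by
  constructor
  · exact ⟨Finset.filter_subset _ _, destruct_noconsec h1 h2⟩
  · funext i
    have hv := val_le i
    have := destruct_value h1 h2 (n - i.val) (by omega)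
    rw [show n - (n - i.val) = i.val from by omega, cast_val_eq] at this
    rw [cOf]
    omega

lemma vOf_cOf {s : Finset ℕ} (hg : Good n s) : vOf n (cOf n s) = s := by
  ext p
  rw [mem_vOf_iff]
  constructor
  · rintro ⟨hp1, hpn, hpc⟩
    have hn2 : 2 ≤ n := by omega
    rw [cOf_apply (show p - 1 ≤ n from by omega)] at hpc
    have hlt := lt_nxt (s := s) (show p - 1 < n from by omega)
    have hnxt : nxt n s (p-1) = p := by omega
    rcases nxt_mem (n := n) (s := s) (j := p - 1) with hm | hm
    · rwa [hnxt] at hm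
    · omega
  · intro hp
    have hb := good_mem hg hp
    refine ⟨by omega, by omega, ?_⟩
    have := cOf_two hg (show p - 1 + 1 ∈ s from by rwa [show p - 1 + 1 = p from by omega])
    exact this

end Part2K
/-- The number of subsets of `{1, …, n-1}` containing no two
consecutive integers equals the Fibonacci number `F (n+1)` (with `F 1 = F 2 = 1`).
Consequently, the number of `(n+1)`-LNakayama algebras of global dimension at most `2`
satisfying the restricted Gorenstein condition equals `F (n+1)`. -/
theorem fibonacci_resgor_count (n : ℕ) :
    Nat.card {s : Finset ℕ // s ⊆ Finset.Icc 1 (n - 1) ∧ ∀ x ∈ s, x + 1 ∉ s} =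
        Nat.fib (n + 1) ∧
      Nat.card {c : ZMod (n + 1) → ℕ // IsLKupisch n c ∧ ResGorLE2 n c} =
        Nat.fib (n + 1) := by
  have hpart1 : Nat.card {s : Finset ℕ // s ⊆ Finset.Icc 1 (n - 1) ∧ ∀ x ∈ s, x + 1 ∉ s}
      = Nat.fib (n + 1) := by
    rcases n with _ | m
    · exact (card_noconsec 0).trans (by decide)
    · exact card_noconsec m
  refine ⟨hpart1, ?_⟩
  rw [← hpart1]
  refine Nat.card_congr
    ({ toFun := fun x => ⟨vOf n x.1, (destruct x.2.1 x.2.2).1⟩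
       invFun := fun y => ⟨cOf n y.1, isLKupisch_cOf y.2, resGor_cOf y.2⟩
       left_inv := fun x => Subtype.ext (destruct x.2.1 x.2.2).2
       right_inv := fun y => Subtype.ext (vOf_cOf y.2) } :
      {c : ZMod (n + 1) → ℕ // IsLKupisch n c ∧ ResGorLE2 n c} ≃
        {s : Finset ℕ // s ⊆ Finset.Icc 1 (n - 1) ∧ ∀ x ∈ s, x + 1 ∉ s})

end Nak
end
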